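/- arXiv:math/0609259 — 2 statements merged into one kernel-verified Lean document; each statement's English description precedes it below -/
import Mathlib

section
/- Let F, G be probability measures on ℝ^K and ℝ respectively, and K_h ∈ L²(ℝ). Define D(y) = ∫ Π_k K_h(y_k − u_k) dF(u) − Π_k ∫ K_h(y_k − u) dG_k(u) where G_k are the marginals of F. Then ∫_{ℝ^K} D(y)² dy = ∬ Π_k K₂(u_k − v_k) dF(u)dF(v) + Π_k ∬ K₂(u − v) dG_k(u)dG_k(v) − 2 ∫ Π_k [∫ K₂(u_k − v) dG_k(v)] dF(u), where K₂(u) = ∫ K_h(u+v)K_h(v) dv. -/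
/-!
With `S μ y = ∫ ∏ₖ K_h (yₖ - uₖ) dμ(u)` we have `D = S F - S (Measure.pi G)`, so expanding the
square reduces everything to `∫ S μ · S ν dy`. The bound `|xy| ≤ (x² + y²)/2` makes
`∏ₖ K_h (yₖ - uₖ) K_h (yₖ - vₖ)` integrable for `μ ⊗ ν ⊗ volume`, and Fubini turns its
`y`-integral into `∏ₖ K₂ (uₖ - vₖ)`; integrals against `Measure.pi G` then factorise
coordinatewise. As `K_h` is only a.e. strongly measurable, it is first replaced by a measurable
representative: this changes `K₂` nowhere and `D` only on a Lebesgue-null set.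
-/

open MeasureTheory

noncomputable def autocorrelation (g : ℝ → ℝ) (u : ℝ) : ℝ :=
  ∫ v, g (u + v) * g v

noncomputable def kernelSmoothing {ι : Type*} [Fintype ι] (g : ℝ → ℝ) (μ : Measure (ι → ℝ))
    (y : ι → ℝ) : ℝ :=
  ∫ u, ∏ k, g (y k - u k) ∂μ

theorem integral_sub_sq {α : Type*} [MeasurableSpace α] {μ : Measure α} {a b : α → ℝ}
    (haa : Integrable (fun x => a x * a x) μ) (hab : Integrable (fun x => a x * b x) μ)
    (hbb : Integrable (fun x => b x * b x) μ) :
    ∫ x, (a x - b x) ^ 2 ∂μ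
      = ∫ x, a x * a x ∂μ - 2 * ∫ x, a x * b x ∂μ + ∫ x, b x * b x ∂μ := by
  have hexpand : ∀ x, (a x - b x) ^ 2 = a x * a x - 2 * (a x * b x) + b x * b x :=
    fun x => by ring
  simp_rw [hexpand]
  rw [integral_add (f := fun x => a x * a x - 2 * (a x * b x)) (haa.sub (hab.const_mul 2)) hbb,
    integral_sub haa (hab.const_mul 2), integral_const_mul]

theorem ae_ae_comp_sub_eq {β : Type*} {f g : ℝ → β} (h : f =ᵐ[volume] g)
    (μ : Measure ℝ) [SFinite μ] : ∀ᵐ t, ∀ᵐ s ∂μ, f (t - s) = g (t - s) := by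
  -- `{f ≠ g}` need not be measurable, so the order of integration is swapped on a measurable
  -- null superset.
  obtain ⟨N, hsub, hN, hN0⟩ := exists_measurable_superset_of_null (ae_iff.mp h)
  have hoff : ∀ s, ∀ᵐ t, t - s ∉ N := fun s =>
    (measurePreserving_sub_right volume s).quasiMeasurePreserving.ae
      (measure_eq_zero_iff_ae_notMem.mp hN0)
  have hcomm := (Measure.ae_ae_comm (μ := volume) (ν := μ) (p := fun t s => t - s ∉ N)
    ((measurable_fst.sub measurable_snd) hN.compl)).2 (.of_forall hoff)
  filter_upwards [hcomm] with t ht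
  filter_upwards [ht] with s hs
  exact not_not.mp fun hne => hs (hsub hne)

section Autocorrelation

variable {g : ℝ → ℝ}

theorem integral_comp_sub_mul_comp_sub (g : ℝ → ℝ) (a b : ℝ) :
    ∫ t, g (t - a) * g (t - b) = autocorrelation g (a - b) := by
  rw [autocorrelation, ← integral_add_right_eq_self _ a]
  congr 1 with v
  rw [mul_comm, add_sub_cancel_right, add_sub_assoc, add_comm]

theorem integrable_comp_sub_mul_comp_sub (hg : MemLp g 2 volume) (a b : ℝ) :
    Integrable (fun t => g (t - a) * g (t - b)) :=
  (hg.comp_measurePreserving (measurePreserving_sub_right volume a)).integrable_mul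
    (hg.comp_measurePreserving (measurePreserving_sub_right volume b))

theorem integral_abs_comp_sub_mul_comp_sub_le (hg : MemLp g 2 volume) (a b : ℝ) :
    ∫ t, |g (t - a) * g (t - b)| ≤ ∫ t, g t ^ 2 := by
  have hsq : Integrable fun t => g t ^ 2 := hg.integrable_sq
  calc ∫ t, |g (t - a) * g (t - b)|
      ≤ ∫ t, (g (t - a) ^ 2 + g (t - b) ^ 2) / 2 := by
        refine integral_mono (integrable_comp_sub_mul_comp_sub hg a b).abs
          (((hsq.comp_sub_right a).add (hsq.comp_sub_right b)).div_const 2) fun t => ?_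
        rw [abs_mul]
        nlinarith [two_mul_le_add_sq |g (t - a)| |g (t - b)|, sq_abs (g (t - a)),
          sq_abs (g (t - b))]
    _ = ∫ t, g t ^ 2 := by
        rw [integral_div, integral_add (hsq.comp_sub_right a) (hsq.comp_sub_right b),
          integral_sub_right_eq_self (fun t => g t ^ 2),
          integral_sub_right_eq_self (fun t => g t ^ 2)]
        ring

theorem autocorrelation_congr_ae {f : ℝ → ℝ} (h : f =ᵐ[volume] g) :
    autocorrelation f = autocorrelation g := by
  ext u
  exact integral_congr_ae
    (((measurePreserving_add_left volume u).quasiMeasurePreserving.ae_eq h).mul h)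

end Autocorrelation

section KernelSmoothing

variable {ι : Type*} [Fintype ι] {g : ℝ → ℝ}

theorem kernelSmoothing_congr_ae {f : ℝ → ℝ} (h : f =ᵐ[volume] g)
    (μ : Measure (ι → ℝ)) [SFinite μ] :
    kernelSmoothing f μ =ᵐ[volume] kernelSmoothing g μ := by
  have hcoord : ∀ k, ∀ᵐ y : ι → ℝ, ∀ᵐ u ∂μ, f (y k - u k) = g (y k - u k) := fun k =>
    (Measure.quasiMeasurePreserving_eval (fun _ : ι => (volume : Measure ℝ)) k).ae
      (p := fun t => ∀ᵐ u ∂μ, f (t - u k) = g (t - u k))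
      ((ae_ae_comp_sub_eq h (μ.map (Function.eval k))).mono fun t ht =>
        ae_of_ae_map (measurable_pi_apply k).aemeasurable ht)
  filter_upwards [ae_all_iff.2 hcoord] with y hy
  refine integral_congr_ae ?_
  filter_upwards [ae_all_iff.2 hy] with u hu
  exact Finset.prod_congr rfl fun k _ => hu k

theorem kernelSmoothing_pi (g : ℝ → ℝ) (μ : ι → Measure ℝ) [∀ k, SigmaFinite (μ k)]
    (y : ι → ℝ) : kernelSmoothing g (Measure.pi μ) y = ∏ k, ∫ s, g (y k - s) ∂μ k :=
  integral_fintype_prod_eq_prod (fun k s => g (y k - s))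

theorem kernelSmoothing_mul_kernelSmoothing (g : ℝ → ℝ) (μ ν : Measure (ι → ℝ)) [SFinite μ]
    [SFinite ν] (y : ι → ℝ) : kernelSmoothing g μ y * kernelSmoothing g ν y
      = ∫ p, ∏ k, g (y k - p.1 k) * g (y k - p.2 k) ∂μ.prod ν := by
  simp only [kernelSmoothing, Finset.prod_mul_distrib]
  exact (integral_prod_mul _ _).symm

theorem integrable_prod_comp_sub_mul_comp_sub (hgm : Measurable g) (hg : MemLp g 2 volume)
    (ρ : Measure ((ι → ℝ) × (ι → ℝ))) [IsFiniteMeasure ρ] :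
    Integrable (fun q : ((ι → ℝ) × (ι → ℝ)) × (ι → ℝ) =>
      ∏ k, g (q.2 k - q.1.1 k) * g (q.2 k - q.1.2 k)) (ρ.prod volume) := by
  have hmeas : AEStronglyMeasurable (fun q : ((ι → ℝ) × (ι → ℝ)) × (ι → ℝ) =>
      ∏ k, g (q.2 k - q.1.1 k) * g (q.2 k - q.1.2 k)) (ρ.prod volume) := by
    fun_prop
  refine (integrable_prod_iff hmeas).2 ⟨.of_forall fun p => ?_, ?_⟩
  · exact Integrable.fintype_prod (f := fun k t => g (t - p.1 k) * g (t - p.2 k))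
      fun k => integrable_comp_sub_mul_comp_sub hg _ _
  refine Integrable.mono' (integrable_const ((∫ t, g t ^ 2) ^ Fintype.card ι))
    hmeas.norm.integral_prod_right' (.of_forall fun p => ?_)
  calc ‖∫ y : ι → ℝ, ‖∏ k, g (y k - p.1 k) * g (y k - p.2 k)‖‖
      = ∏ k, ∫ t, |g (t - p.1 k) * g (t - p.2 k)| := by
        rw [Real.norm_of_nonneg (integral_nonneg fun _ => norm_nonneg _)]
        simp only [norm_prod, Real.norm_eq_abs]
        exact integral_fintype_prod_volume_eq_prod (fun k t => |g (t - p.1 k) * g (t - p.2 k)|)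
    _ ≤ ∏ _k : ι, ∫ t, g t ^ 2 :=
        Finset.prod_le_prod (fun _ _ => integral_nonneg fun _ => abs_nonneg _)
          fun _ _ => integral_abs_comp_sub_mul_comp_sub_le hg _ _
    _ = (∫ t, g t ^ 2) ^ Fintype.card ι := Finset.prod_const _

variable (μ ν : Measure (ι → ℝ)) [IsFiniteMeasure μ] [IsFiniteMeasure ν]

theorem integrable_kernelSmoothing_mul (hgm : Measurable g) (hg : MemLp g 2 volume) :
    Integrable (fun y => kernelSmoothing g μ y * kernelSmoothing g ν y) := by
  simp only [kernelSmoothing_mul_kernelSmoothing]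
  exact (integrable_prod_comp_sub_mul_comp_sub hgm hg (μ.prod ν)).integral_prod_right

theorem integral_kernelSmoothing_mul (hgm : Measurable g) (hg : MemLp g 2 volume) :
    ∫ y, kernelSmoothing g μ y * kernelSmoothing g ν y
      = ∫ u, kernelSmoothing (autocorrelation g) ν u ∂μ := by
  have hH := integrable_prod_comp_sub_mul_comp_sub hgm hg (μ.prod ν)
  have hconv : ∀ p : (ι → ℝ) × (ι → ℝ),
      ∫ y : ι → ℝ, ∏ k, g (y k - p.1 k) * g (y k - p.2 k)
        = ∏ k, autocorrelation g (p.1 k - p.2 k) :=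
    fun p => (integral_fintype_prod_volume_eq_prod
      (fun k t => g (t - p.1 k) * g (t - p.2 k))).trans
        (Finset.prod_congr rfl fun k _ => integral_comp_sub_mul_comp_sub g _ _)
  calc ∫ y, kernelSmoothing g μ y * kernelSmoothing g ν y
      = ∫ y : ι → ℝ, ∫ p, ∏ k, g (y k - p.1 k) * g (y k - p.2 k) ∂μ.prod ν := by
        simp only [kernelSmoothing_mul_kernelSmoothing]
    _ = ∫ p, (∫ y : ι → ℝ, ∏ k, g (y k - p.1 k) * g (y k - p.2 k)) ∂μ.prod ν :=
        (integral_integral_swap hH).symm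
    _ = ∫ p, ∏ k, autocorrelation g (p.1 k - p.2 k) ∂μ.prod ν := by simp only [hconv]
    _ = ∫ u, kernelSmoothing (autocorrelation g) ν u ∂μ :=
        integral_prod _ (hH.integral_prod_left.congr (.of_forall hconv))

theorem integral_sq_kernelSmoothing_sub (hgm : Measurable g) (hg : MemLp g 2 volume) :
    ∫ y, (kernelSmoothing g μ y - kernelSmoothing g ν y) ^ 2
      = ∫ u, kernelSmoothing (autocorrelation g) μ u ∂μ
        - 2 * ∫ u, kernelSmoothing (autocorrelation g) ν u ∂μ
        + ∫ u, kernelSmoothing (autocorrelation g) ν u ∂ν := by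
  rw [integral_sub_sq (integrable_kernelSmoothing_mul μ μ hgm hg)
    (integrable_kernelSmoothing_mul μ ν hgm hg) (integrable_kernelSmoothing_mul ν ν hgm hg),
    integral_kernelSmoothing_mul μ μ hgm hg, integral_kernelSmoothing_mul μ ν hgm hg,
    integral_kernelSmoothing_mul ν ν hgm hg]

end KernelSmoothing

theorem stmt8_general {K : ℕ}
    (F : Measure (Fin K → ℝ)) [IsProbabilityMeasure F]
    (G : Fin K → Measure ℝ) (hG : ∀ k, G k = F.map (fun u => u k))
    (Kh : ℝ → ℝ) (hKh : MemLp Kh 2 (volume : Measure ℝ))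
    (K₂ : ℝ → ℝ) (hK₂ : ∀ u : ℝ, K₂ u = ∫ v : ℝ, Kh (u + v) * Kh v)
    (D : (Fin K → ℝ) → ℝ)
    (hD : ∀ y, D y = (∫ u, ∏ k, Kh (y k - u k) ∂F)
          - ∏ k, ∫ u, Kh (y k - u) ∂(G k)) :
    ∫ y : Fin K → ℝ, (D y)^2
      = (∫ u, ∫ v, ∏ k, K₂ (u k - v k) ∂F ∂F)
        + (∏ k, ∫ u, ∫ v, K₂ (u - v) ∂(G k) ∂(G k))
        - 2 * ∫ u, ∏ k, (∫ v, K₂ (u k - v) ∂(G k)) ∂F := by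
  obtain ⟨g, hgm, hKhg⟩ : ∃ g, Measurable g ∧ Kh =ᵐ[volume] g :=
    ⟨_, hKh.1.stronglyMeasurable_mk.measurable, hKh.1.ae_eq_mk⟩
  have hg : MemLp g 2 volume := hKh.ae_eq hKhg
  have hK₂g : K₂ = autocorrelation g := (funext hK₂).trans (autocorrelation_congr_ae hKhg)
  have (k : Fin K) : IsProbabilityMeasure (G k) :=
    hG k ▸ Measure.isProbabilityMeasure_map (measurable_pi_apply k).aemeasurable
  have hDg : D =ᵐ[volume] kernelSmoothing g F - kernelSmoothing g (Measure.pi G) := by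
    have hDKh : D = kernelSmoothing Kh F - kernelSmoothing Kh (Measure.pi G) :=
      funext fun y => by rw [hD, Pi.sub_apply, kernelSmoothing_pi]; rfl
    exact hDKh ▸
      (kernelSmoothing_congr_ae hKhg F).sub (kernelSmoothing_congr_ae hKhg (Measure.pi G))
  calc ∫ y, D y ^ 2
      = ∫ y, (kernelSmoothing g F y - kernelSmoothing g (Measure.pi G) y) ^ 2 :=
        integral_congr_ae (hDg.fun_comp (· ^ 2))
    _ = _ := by
        rw [integral_sq_kernelSmoothing_sub F (Measure.pi G) hgm hg, ← hK₂g]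
        simp only [kernelSmoothing_pi]
        rw [integral_fintype_prod_eq_prod (fun k s => ∫ v, K₂ (s - v) ∂G k)]
        unfold kernelSmoothing
        ring

/-- the kernel trick: ∫ D(y)² dy expressed via the autocorrelation kernel K₂. -/
theorem stmt8 {K : ℕ} (hK : 1 ≤ K)
    (F : Measure (Fin K → ℝ)) [IsProbabilityMeasure F]
    (G : Fin K → Measure ℝ) (hG : ∀ k, G k = F.map (fun u => u k))
    (Kh : ℝ → ℝ) (hKh : MemLp Kh 2 (volume : Measure ℝ))
    (K₂ : ℝ → ℝ) (hK₂ : ∀ u : ℝ, K₂ u = ∫ v : ℝ, Kh (u + v) * Kh v)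
    (D : (Fin K → ℝ) → ℝ)
    (hD : ∀ y, D y = (∫ u, ∏ k, Kh (y k - u k) ∂F)
          - ∏ k, ∫ u, Kh (y k - u) ∂(G k)) :
    ∫ y : Fin K → ℝ, (D y)^2
      = (∫ u, ∫ v, ∏ k, K₂ (u k - v k) ∂F ∂F)
        + (∏ k, ∫ u, ∫ v, K₂ (u - v) ∂(G k) ∂(G k))
        - 2 * ∫ u, ∏ k, (∫ v, K₂ (u k - v) ∂(G k)) ∂F :=
  stmt8_general F G hG Kh hKh K₂ hK₂ D hD
end

section
/- Let K : ℝ → ℝ be nonnegative integrable with ∫ K = 1 and lim_{|x|→∞} |x|K(x) = 0 (Parzen–Rosenblatt kernel), and let p : ℝ → ℝ be a bounded density continuous at t. Then lim_{h→0} ∫ (1/h) K((t − u)/h) p(u) du = p(t). -/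
open MeasureTheory Filter Topology Module

/-!
Substituting `u = t - h • v` turns the kernel-smoothed value into `∫ K v * p (t - h • v)`.
For `h → 0` the integrand tends pointwise to `K v * p t` by continuity of `p` at `t`, and it is
dominated by `|K v| * C` when `|p| ≤ C`, so dominated convergence gives `(∫ K) * p t`.
-/

section Bochner

variable {E : Type*} [NormedAddCommGroup E] [NormedSpace ℝ E] [FiniteDimensional ℝ E]
  [MeasurableSpace E] [BorelSpace E] (μ : Measure E) [μ.IsAddHaarMeasure]

theorem integral_rescaled_kernel_mul_eq (K p : E → ℝ) (t : E) {h : ℝ} (hh : 0 < h) :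
    ∫ u, (h ^ finrank ℝ E)⁻¹ * K (h⁻¹ • (t - u)) * p u ∂μ = ∫ v, K v * p (t - h • v) ∂μ := by
  set g : E → ℝ := fun w => K (h⁻¹ • w) * p (t - w)
  calc ∫ u, (h ^ finrank ℝ E)⁻¹ * K (h⁻¹ • (t - u)) * p u ∂μ
      = (h ^ finrank ℝ E)⁻¹ * ∫ u, g (t - u) ∂μ := by
        rw [← integral_const_mul]
        simp only [g, sub_sub_cancel, mul_assoc]
    _ = (h ^ finrank ℝ E)⁻¹ * ∫ w, g w ∂μ := by rw [integral_sub_left_eq_self g μ t]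
    _ = ∫ v, g (h • v) ∂μ := by
        rw [Measure.integral_comp_smul_of_nonneg μ g h (hR := hh.le), smul_eq_mul]
    _ = ∫ v, K v * p (t - h • v) ∂μ := by
        simp only [g, inv_smul_smul₀ hh.ne']

theorem aestronglyMeasurable_comp_sub_smul {p : E → ℝ} (hp : AEStronglyMeasurable p μ) (t : E)
    {h : ℝ} (hh : h ≠ 0) : AEStronglyMeasurable (fun v => p (t - h • v)) μ :=
  hp.comp_quasiMeasurePreserving
    ((quasiMeasurePreserving_sub_left μ t).comp (Measure.quasiMeasurePreserving_smul μ hh))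

theorem tendsto_integral_mul_comp_sub_smul {K p : E → ℝ} (hK : Integrable K μ) {C : ℝ}
    (hpC : ∀ x, |p x| ≤ C) (hp : AEStronglyMeasurable p μ) {t : E} (hcont : ContinuousAt p t) :
    Tendsto (fun h : ℝ => ∫ v, K v * p (t - h • v) ∂μ) (𝓝[≠] 0)
      (𝓝 ((∫ v, K v ∂μ) * p t)) := by
  rw [← integral_mul_const]
  refine tendsto_integral_filter_of_dominated_convergence (fun v => |K v| * C) ?_ ?_
    (hK.abs.mul_const C) ?_
  · filter_upwards [self_mem_nhdsWithin] with h hh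
    exact hK.aestronglyMeasurable.mul (aestronglyMeasurable_comp_sub_smul μ hp t hh)
  · refine Eventually.of_forall fun h => Eventually.of_forall fun v => ?_
    rw [Real.norm_eq_abs, abs_mul]
    exact mul_le_mul_of_nonneg_left (hpC _) (abs_nonneg _)
  · refine Eventually.of_forall fun v => (Tendsto.const_mul _ ?_)
    have hsub : Tendsto (fun h : ℝ => t - h • v) (𝓝 0) (𝓝 t) :=
      (by fun_prop : Continuous fun h : ℝ => t - h • v).tendsto' 0 t (by simp)
    exact hcont.tendsto.comp (hsub.mono_left nhdsWithin_le_nhds)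

end Bochner

theorem stmt11_general (K : ℝ → ℝ) (hKi : Integrable K)
    (hK1 : ∫ x : ℝ, K x = 1)
    (p : ℝ → ℝ) (hp0 : ∀ x, 0 ≤ p x) (hpi : Integrable p)
    (M : ℝ) (hpb : ∀ x, p x ≤ M)
    (t : ℝ) (hcont : ContinuousAt p t) :
    Tendsto (fun h : ℝ => ∫ u : ℝ, (1 / h) * K ((t - u) / h) * p u)
      (nhdsWithin 0 (Set.Ioi 0)) (nhds (p t)) := by
  have hpM : ∀ x, |p x| ≤ M := fun x => abs_le.2 ⟨by linarith [hp0 x, hpb x], hpb x⟩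
  have hlim := (tendsto_integral_mul_comp_sub_smul volume hKi hpM hpi.aestronglyMeasurable
    hcont).mono_left (nhdsWithin_mono 0 fun h (hh : 0 < h) => hh.ne')
  rw [hK1, one_mul] at hlim
  refine hlim.congr' ?_
  filter_upwards [self_mem_nhdsWithin] with h (hh : 0 < h)
  simpa [div_eq_inv_mul] using (integral_rescaled_kernel_mul_eq volume K p t hh).symm

/-- Bochner's lemma: for a Parzen–Rosenblatt kernel K and a bounded
density p continuous at t, lim_{h→0⁺} ∫ (1/h) K((t−u)/h) p(u) du = p(t). -/
theorem stmt11 (K : ℝ → ℝ) (hK0 : ∀ x, 0 ≤ K x) (hKi : Integrable K)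
    (hK1 : ∫ x : ℝ, K x = 1)
    (hKt : Tendsto (fun x : ℝ => |x| * K x) (Filter.cocompact ℝ) (nhds 0))
    (p : ℝ → ℝ) (hp0 : ∀ x, 0 ≤ p x) (hpi : Integrable p) (hp1 : ∫ x : ℝ, p x = 1)
    (M : ℝ) (hpb : ∀ x, p x ≤ M)
    (t : ℝ) (hcont : ContinuousAt p t) :
    Tendsto (fun h : ℝ => ∫ u : ℝ, (1 / h) * K ((t - u) / h) * p u)
      (nhdsWithin 0 (Set.Ioi 0)) (nhds (p t)) :=
  stmt11_general K hKi hK1 p hp0 hpi M hpb t hcont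
end
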